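/- Let E_n be the exterior algebra over ℂ on generators x_1,…,x_n, let n = 2k+1, and let f = x_1 x_{k+2} + x_2 x_{k+3} + ⋯ + x_k x_{2k+1} and g = x_1 x_{k+1} + x_2 x_{k+2} + ⋯ + x_k x_{2k}. Then the monomial x_{k+1} x_{k+2} ⋯ x_{2k+1} does not lie in the two-sided ideal generated by f and g; consequently dim (E_{2k+1}/(f,g))_{k+1} ≥ 1. -/

import Mathlib

open Finset
noncomputable section

/-- The `i`-th generator `x_i` (1-indexed, `1 ≤ i ≤ n`) of the exterior algebra `E_n`
over `ℂ`. -/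
def X (n i : ℕ) : ExteriorAlgebra ℂ (Fin n → ℂ) :=
  ExteriorAlgebra.ι ℂ (fun j => if (j : ℕ) + 1 = i then 1 else 0)

/-- The degree-`s` graded component of `E_n`, spanned by the products of `s` distinct
generators (with strictly increasing indices in `{1, …, n}`). -/
def comp (n s : ℕ) : Submodule ℂ (ExteriorAlgebra ℂ (Fin n → ℂ)) :=
  Submodule.span ℂ { m | ∃ l : List ℕ, l.length = s ∧ l.Chain' (· < ·) ∧
    (∀ i ∈ l, 1 ≤ i ∧ i ≤ n) ∧ m = (l.map (X n)).prod }

/-- The two-sided ideal of `E_n` generated by `f` and `g`, as a `ℂ`-submodule. -/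
def idl (n : ℕ) (f g : ExteriorAlgebra ℂ (Fin n → ℂ)) :
    Submodule ℂ (ExteriorAlgebra ℂ (Fin n → ℂ)) :=
  Submodule.span ℂ { x | ∃ u v, x = u * f * v ∨ x = u * g * v }

/-! ### Auxiliary definitions for the proof -/

/-- Projection onto the last `k+1` coordinates. -/
def P (k : ℕ) : (Fin (2 * k + 1) → ℂ) →ₗ[ℂ] (Fin (k + 1) → ℂ) :=
  LinearMap.funLeft ℂ ℂ (fun j : Fin (k + 1) => ⟨k + (j : ℕ), by omega⟩)

/-- The induced algebra map on exterior algebras. -/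
def phi (k : ℕ) : ExteriorAlgebra ℂ (Fin (2 * k + 1) → ℂ) →ₐ[ℂ]
    ExteriorAlgebra ℂ (Fin (k + 1) → ℂ) :=
  ExteriorAlgebra.map (P k)

/-- Standard basis vectors of `Fin (k+1) → ℂ` (0-indexed). -/
def std (k j : ℕ) : Fin (k + 1) → ℂ := fun i => if (i : ℕ) = j then 1 else 0

lemma phi_X_low (k i : ℕ) (h1 : 1 ≤ i) (h2 : i ≤ k) : phi k (X (2 * k + 1) i) = 0 := by
  rw [X, phi, ExteriorAlgebra.map_apply_ι]
  have : P k (fun j : Fin (2 * k + 1) => if (j : ℕ) + 1 = i then 1 else 0) = 0 := by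
    funext j
    simp only [P, LinearMap.funLeft_apply]
    have : ¬ (k + (j : ℕ) + 1 = i) := by omega
    simp [this]
  rw [this, map_zero]

lemma phi_X_high (k j : ℕ) : phi k (X (2 * k + 1) (k + 1 + j)) =
    ExteriorAlgebra.ι ℂ (std k j) := by
  rw [X, phi, ExteriorAlgebra.map_apply_ι]
  congr 1
  funext i
  simp only [P, LinearMap.funLeft_apply, std]
  have : k + (i : ℕ) + 1 = k + 1 + j ↔ (i : ℕ) = j := by omega
  simp [this]

lemma phi_f (k : ℕ) (f : ExteriorAlgebra ℂ (Fin (2 * k + 1) → ℂ)) (c : ℕ → ℕ)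
    (hf : f = ∑ i ∈ Finset.Icc 1 k, X (2 * k + 1) i * X (2 * k + 1) (c i)) :
    phi k f = 0 := by
  rw [hf, map_sum]
  refine Finset.sum_eq_zero fun i hi => ?_
  rw [Finset.mem_Icc] at hi
  rw [map_mul, phi_X_low k i hi.1 hi.2, zero_mul]

/-- The evaluation functional on `E_{k+1}`, picking out the top coefficient. -/
def L (k : ℕ) : ExteriorAlgebra ℂ (Fin (k + 1) → ℂ) →ₗ[ℂ] ℂ :=
  ExteriorAlgebra.liftAlternating fun i =>
    if h : i = k + 1 then
      (Matrix.detRowAlternating : (Fin (k + 1) → ℂ) [⋀^Fin (k + 1)]→ₗ[ℂ] ℂ).domDomCongr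
        (finCongr h.symm)
    else 0

lemma L_top (k : ℕ) :
    L k (ExteriorAlgebra.ιMulti ℂ (k + 1) (fun i : Fin (k + 1) => std k (i : ℕ))) = 1 := by
  rw [L, ExteriorAlgebra.liftAlternating_apply_ιMulti, dif_pos rfl]
  have : finCongr (rfl : k + 1 = k + 1).symm = Equiv.refl (Fin (k + 1)) := by
    ext i; rfl
  rw [this, AlternatingMap.domDomCongr_refl, Matrix.detRowAlternating]
  show Matrix.det (Matrix.of fun i : Fin (k + 1) => std k (i : ℕ)) = 1
  have : (Matrix.of fun i : Fin (k + 1) => std k (i : ℕ)) = 1 := by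
    ext i j
    simp only [Matrix.of_apply, std, Matrix.one_apply]
    by_cases h : i = j
    · simp [h]
    · have : ¬ ((j : ℕ) = (i : ℕ)) := fun hc => h (Fin.ext hc).symm
      simp [h, this]
  rw [this, Matrix.det_one]

lemma phi_mono (k : ℕ) :
    phi k (((List.range (k + 1)).map (fun j => X (2 * k + 1) (k + 1 + j))).prod) =
      ExteriorAlgebra.ιMulti ℂ (k + 1) (fun i : Fin (k + 1) => std k (i : ℕ)) := by
  rw [map_list_prod, List.map_map, ExteriorAlgebra.ιMulti_apply, List.ofFn_eq_map,
    ← (show (List.finRange (k + 1)).map (fun i : Fin (k + 1) => (i : ℕ)) = List.range (k + 1)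
      from List.ext_getElem (by simp) (by simp)), List.map_map]
  exact congrArg List.prod (List.map_congr_left fun i _ => phi_X_high k (i : ℕ))

set_option synthInstance.maxHeartbeats 1000000

/-- in `E_{2k+1}` with `f = x_1 x_{k+2} + ⋯ + x_k x_{2k+1}` and
`g = x_1 x_{k+1} + ⋯ + x_k x_{2k}`, the monomial `x_{k+1} x_{k+2} ⋯ x_{2k+1}` does not
lie in the two-sided ideal `(f,g)`; consequently `dim (E_{2k+1}/(f,g))_{k+1} ≥ 1`. -/
theorem stmt13 (k : ℕ) (f g : ExteriorAlgebra ℂ (Fin (2 * k + 1) → ℂ))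
    (hf : f = ∑ i ∈ Finset.Icc 1 k, X (2 * k + 1) i * X (2 * k + 1) (k + 1 + i))
    (hg : g = ∑ i ∈ Finset.Icc 1 k, X (2 * k + 1) i * X (2 * k + 1) (k + i)) :
    ((List.range (k + 1)).map (fun j => X (2 * k + 1) (k + 1 + j))).prod
        ∉ idl (2 * k + 1) f g ∧
    1 ≤ Module.rank ℂ
      (Submodule.map (idl (2 * k + 1) f g).mkQ (comp (2 * k + 1) (k + 1))) := by
  set m := ((List.range (k + 1)).map (fun j => X (2 * k + 1) (k + 1 + j))).prod with hm
  have hφf : phi k f = 0 := phi_f k f _ hf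
  have hφg : phi k g = 0 := phi_f k g _ hg
  have hidl : ∀ x ∈ idl (2 * k + 1) f g, phi k x = 0 := by
    intro x hx
    have hle : idl (2 * k + 1) f g ≤ LinearMap.ker ((phi k).toLinearMap) := by
      rw [idl]
      refine Submodule.span_le.2 ?_
      rintro y ⟨u, v, rfl | rfl⟩ <;>
        simp only [SetLike.mem_coe, LinearMap.mem_ker, AlgHom.toLinearMap_apply, map_mul,
          hφf, hφg, mul_zero, zero_mul]
    exact hle hx
  have hnm : m ∉ idl (2 * k + 1) f g := by
    intro hmem
    have h0 : phi k m = 0 := hidl m hmem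
    have h1 : L k (phi k m) = 1 := by rw [phi_mono k]; exact L_top k
    rw [h0, map_zero] at h1
    exact one_ne_zero h1.symm
  refine ⟨hnm, ?_⟩
  -- the monomial lies in the component of degree k+1
  have hcomp : m ∈ comp (2 * k + 1) (k + 1) := by
    apply Submodule.subset_span
    refine ⟨(List.range (k + 1)).map (fun j => k + 1 + j), by simp, ?_, ?_, ?_⟩
    · rw [List.Chain', List.isChain_map, List.isChain_range_succ]
      intro i _; omega
    · intro i hi
      simp only [List.mem_map, List.mem_range] at hi
      obtain ⟨j, hj, rfl⟩ := hi
      omega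
    · rw [List.map_map]
      rfl
  set S := Submodule.map (idl (2 * k + 1) f g).mkQ (comp (2 * k + 1) (k + 1)) with hS
  have hmS : (idl (2 * k + 1) f g).mkQ m ∈ S := Submodule.mem_map_of_mem hcomp
  have hne : (idl (2 * k + 1) f g).mkQ m ≠ 0 := by
    intro h
    apply hnm
    rwa [← Submodule.ker_mkQ (idl (2 * k + 1) f g), LinearMap.mem_ker]
  have : Nontrivial S := ⟨⟨(idl (2 * k + 1) f g).mkQ m, hmS⟩, 0, by
    simp only [ne_eq, Submodule.mk_eq_zero]
    exact hne⟩
  have hpos : 0 < Module.rank ℂ S := rank_pos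
  exact Cardinal.one_le_iff_pos.2 hpos
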